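/- In the ABC protocol, if G is a transaction DAG with the minimal number of transactions among all DAGs producible by the protocol that contain two confirmed conflicting transactions t_x and t_y, then G contains no unconfirmed transactions. -/

import Mathlib

open scoped Classical

/-- An abstract model of a message DAG produced by the ABC protocol.
Transactions, acks and outputs form the messages of the DAG; every output
carries a value and is delegated to a validator; transactions spend outputs
of previous transactions; acks are issued by validators and sign transactions;
messages reference each other acyclically. -/
structure ABC where
  /-- agents / validators -/
  Val : Type
  /-- transactions of the DAG -/
  Tx : Type
  /-- acks of the DAG -/
  Ack : Type
  /-- transaction outputs -/
  Out : Type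
  [fintypeTx : Fintype Tx]
  [fintypeAck : Fintype Ack]
  [fintypeOut : Fintype Out]
  /-- the total money in the system -/
  M : ℚ
  /-- the value (money amount) of an output -/
  value : Out → ℚ
  value_nonneg : ∀ o, 0 ≤ value o
  /-- the (unique) transaction of which `o` is an output -/
  producer : Out → Tx
  /-- `spends t o` : output `o` is an input of transaction `t` -/
  spends : Tx → Out → Prop
  /-- the validator key indicated in a transaction -/
  txValidator : Tx → Val
  /-- the validator to which an output delegates its stake -/
  delegatedTo : Out → Val
  /-- the genesis transaction -/
  genesis : Tx
  /-- the genesis has no inputs -/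
  genesis_no_inputs : ∀ o, ¬ spends genesis o
  /-- outputs of a non-genesis transaction are delegated to the validator
  indicated in the transaction (genesis outputs list the initial validators) -/
  delegated_eq : ∀ o, producer o ≠ genesis → delegatedTo o = txValidator (producer o)
  /-- the output values of a non-genesis transaction sum to its input values -/
  value_conserved : ∀ t, t ≠ genesis →
    (∑ o : Out, if producer o = t then value o else 0) =
      ∑ o : Out, if spends t o then value o else 0
  /-- the genesis output values sum to the total money `M` -/
  genesis_M : (∑ o : Out, if producer o = genesis then value o else 0) = M
  /-- the validator that issued an ack -/
  ackValidator : Ack → Val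
  /-- the set of transactions an ack signs -/
  ackSigns : Ack → Tx → Prop
  /-- hash references between messages (`Sum.inl` = transaction, `Sum.inr` = ack) -/
  ref : Tx ⊕ Ack → Tx ⊕ Ack → Prop
  /-- a transaction references the transactions producing its inputs -/
  ref_inputs : ∀ t o, spends t o → ref (Sum.inl t) (Sum.inl (producer o))
  /-- an ack references the transactions it signs -/
  ref_signs : ∀ a t, ackSigns a t → ref (Sum.inr a) (Sum.inl t)
  /-- the references form a DAG -/
  ref_acyclic : ∀ m, ¬ Relation.TransGen ref m m
  /-- which agents are honest (the remaining ones form the adversary) -/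
  honest : Val → Prop

attribute [instance] ABC.fintypeTx ABC.fintypeAck ABC.fintypeOut

namespace ABC

variable (P : ABC)

/-- messages: transactions and acks -/
abbrev Msg := P.Tx ⊕ P.Ack

/-- `past m` : the set of messages reachable from `m` by following references -/
def past (m : P.Msg) : Set P.Msg := {m' | Relation.ReflTransGen P.ref m m'}

/-- the past of a set of acks -/
def pastA (A : Finset P.Ack) : Set P.Msg := ⋃ a ∈ A, P.past (Sum.inr a)

/-- output `o` is spent in the message set `S` -/
def SpentIn (S : Set P.Msg) (o : P.Out) : Prop :=
  ∃ t, (Sum.inl t : P.Msg) ∈ S ∧ P.spends t o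

/-- `Depends t' t` : transaction `t'` depends on `t`
(reflexive-transitive closure of spending an output of) -/
def Depends : P.Tx → P.Tx → Prop :=
  Relation.ReflTransGen fun t' t => ∃ o, P.spends t' o ∧ P.producer o = t

/-- two transactions share an input -/
def SharesInput (t t' : P.Tx) : Prop := ∃ o, P.spends t o ∧ P.spends t' o

/-- conflicting transactions: two distinct transactions spending a common output
conflict, and conflicts propagate to all transactions depending on them -/
def Conflict (t₁ t₂ : P.Tx) : Prop :=
  ∃ u₁ u₂, P.Depends t₁ u₁ ∧ P.Depends t₂ u₂ ∧ u₁ ≠ u₂ ∧ P.SharesInput u₁ u₂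

/-- the stake delegated to validator `v` in the message set `S`, computed with
respect to a set `C` of (confirmed) transactions: the total value of outputs
of transactions in `C` delegated to `v` and unspent in `S` -/
noncomputable def stakeWith (C : Set P.Tx) (S : Set P.Msg) (v : P.Val) : ℚ :=
  ∑ o : P.Out,
    if P.producer o ∈ C ∧ P.delegatedTo o = v ∧ ¬ P.SpentIn S o then P.value o else 0

/-- `ConfirmedIn S t` : transaction `t` is confirmed using acks present in the
message set `S`.  The genesis is confirmed from the start; a transaction `t` is
confirmed if the transactions producing its inputs are confirmed and there is a
set of acks `A` (in `S`) whose issuing validators sign `t` and together have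
more than `2/3·M` stake delegated in `past A` (stake being computed from
transactions confirmed in `past A`, which is witnessed by the
under-approximation `C` — by nonnegativity of values this is equivalent to the
exact stake exceeding the threshold), and no other transaction in `past A`
shares an input with `t`. -/
inductive ConfirmedIn : Set P.Msg → P.Tx → Prop
  | genesis (S : Set P.Msg) : ConfirmedIn S P.genesis
  | confirm (S : Set P.Msg) (t : P.Tx) (A : Finset P.Ack) (C : Set P.Tx)
      (hacks : ∀ a ∈ A, (Sum.inr a : P.Msg) ∈ S)
      (hinp : ∀ o, P.spends t o → ConfirmedIn S (P.producer o))
      (hsign : ∀ a ∈ A, P.ackSigns a t)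
      (hC : ∀ u ∈ C, ConfirmedIn (P.pastA A) u)
      (hstake : (2 / 3 : ℚ) * P.M <
        ∑ v ∈ A.image P.ackValidator, P.stakeWith C (P.pastA A) v)
      (hnoconf : ∀ t', (Sum.inl t' : P.Msg) ∈ P.pastA A → t' ≠ t → ¬ P.SharesInput t t') :
      ConfirmedIn S t

/-- a transaction is confirmed (in the full DAG) -/
def Confirmed (t : P.Tx) : Prop := P.ConfirmedIn Set.univ t

/-- the stake delegated to validator `v` in the message set `S`
(Definition "delegated stake" of the paper) -/
noncomputable def stake (S : Set P.Msg) (v : P.Val) : ℚ :=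
  P.stakeWith {u | P.ConfirmedIn S u} S v

/-- `A` is a confirming ack set for `t` (the set `A_t` of the paper) -/
def ConfirmsVia (A : Finset P.Ack) (t : P.Tx) : Prop :=
  (∀ o, P.spends t o → P.Confirmed (P.producer o)) ∧
  (∀ a ∈ A, P.ackSigns a t) ∧
  (∃ C : Set P.Tx, (∀ u ∈ C, P.ConfirmedIn (P.pastA A) u) ∧
    (2 / 3 : ℚ) * P.M < ∑ v ∈ A.image P.ackValidator, P.stakeWith C (P.pastA A) v) ∧
  (∀ t', (Sum.inl t' : P.Msg) ∈ P.pastA A → t' ≠ t → ¬ P.SharesInput t t')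

/-- a view: a set of messages closed under references (an agent processes a
message only after having received its whole past) -/
def IsView (V : Set P.Msg) : Prop := ∀ m ∈ V, ∀ m', P.ref m m' → m' ∈ V

/-- honest validators chain their acks: any two acks of an honest validator
are related by references (each ack references the previous one) -/
def HonestChained : Prop :=
  ∀ a₁ a₂ : P.Ack, P.honest (P.ackValidator a₁) → P.ackValidator a₁ = P.ackValidator a₂ →
    Relation.ReflTransGen P.ref (Sum.inr a₁) (Sum.inr a₂) ∨
      Relation.ReflTransGen P.ref (Sum.inr a₂) (Sum.inr a₁)

/-- an honest validator signs at most one of any pair of conflicting transactions -/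
def HonestNoConflictSign : Prop :=
  ∀ a₁ a₂ t₁ t₂, P.honest (P.ackValidator a₁) → P.ackValidator a₁ = P.ackValidator a₂ →
    P.ackSigns a₁ t₁ → P.ackSigns a₂ t₂ → t₁ ≠ t₂ → ¬ P.Conflict t₁ t₂

/-- an execution order: a total ordering of the messages (given by injective
time stamps) respecting message dependence -/
structure Execution where
  time : P.Msg → ℕ
  inj : Function.Injective time
  respects : ∀ m m', P.ref m m' → time m' < time m

/-- the messages issued up to time `n` in execution `E` -/
def prefixAt (E : P.Execution) (n : ℕ) : Set P.Msg := {m | E.time m ≤ n}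

/-- the value of a transaction: the sum of the values of its outputs -/
noncomputable def txValue (t : P.Tx) : ℚ :=
  ∑ o : P.Out, if P.producer o = t then P.value o else 0

/-- the total value of the inputs of `t` that are outputs delegated to the
adversary (the quantity `m_{t,A}` of the paper) -/
noncomputable def advInputValue (t : P.Tx) : ℚ :=
  ∑ o : P.Out, if P.spends t o ∧ ¬ P.honest (P.delegatedTo o) then P.value o else 0

/-- the paper's adversary-stake accounting, at the set `S` of messages issued
so far: the genesis outputs delegated to the adversary, minus `m_{t,A}` for
every honestly delegated transaction `t` already confirmed, plus
`m_t - m_{t,A}` for every adversary-delegated transaction `t` already issued -/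
noncomputable def advStake (S : Set P.Msg) : ℚ :=
  (∑ o : P.Out,
      if P.producer o = P.genesis ∧ ¬ P.honest (P.delegatedTo o) then P.value o else 0)
    - (∑ t : P.Tx,
        if t ≠ P.genesis ∧ P.honest (P.txValidator t) ∧ P.ConfirmedIn S t
        then P.advInputValue t else 0)
    + ∑ t : P.Tx,
        if t ≠ P.genesis ∧ ¬ P.honest (P.txValidator t) ∧ (Sum.inl t : P.Msg) ∈ S
        then P.txValue t - P.advInputValue t else 0

/-- at any time, less than one-third of the total money is delegated to the
adversary -/
def AdvBounded (E : P.Execution) : Prop :=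
  ∀ n : ℕ, P.advStake (P.prefixAt E n) < P.M / 3

/-- the DAG can be produced by the protocol: honest validators chain their
acks and never sign conflicting transactions, and the adversary's stake stays
below `M/3` throughout some execution producing the DAG -/
def Producible : Prop :=
  P.HonestChained ∧ P.HonestNoConflictSign ∧ ∃ E : P.Execution, P.AdvBounded E

/-- the DAG contains two confirmed conflicting transactions -/
def HasDoubleSpend : Prop :=
  ∃ t₁ t₂, P.Confirmed t₁ ∧ P.Confirmed t₂ ∧ P.Conflict t₁ t₂

/-- the time of the latest ack of the ack set `A` -/
noncomputable def latestAck (E : P.Execution) (A : Finset P.Ack) : ℕ :=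
  A.sup fun a => E.time (Sum.inr a)

/-- `t₀` is the first transaction confirmed during the execution `E`,
exhibited by the confirming ack set `A₀` whose latest ack is minimal -/
def FirstConfirmed (E : P.Execution) (t₀ : P.Tx) (A₀ : Finset P.Ack) : Prop :=
  t₀ ≠ P.genesis ∧ P.ConfirmsVia A₀ t₀ ∧
    ∀ (t : P.Tx) (A : Finset P.Ack), t ≠ P.genesis → P.ConfirmsVia A t →
      P.latestAck E A₀ ≤ P.latestAck E A

/-- a transaction is accepted (by an honest agent) if it is confirmed in some
view -/
def Accepted (t : P.Tx) : Prop := ∃ V, P.IsView V ∧ P.ConfirmedIn V t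

/-- Agreement: a transaction confirmed in the view of some honest agent is
confirmed in the view of any honest agent having received (at least) the same
messages — the acks `A_t` are a transferable proof of confirmation, so every
honest agent will accept the same transaction — and no two conflicting
transactions are ever accepted -/
def Agreement : Prop :=
  (∀ (t : P.Tx) (V V' : Set P.Msg), P.IsView V → P.IsView V' → V ⊆ V' →
      P.ConfirmedIn V t → P.ConfirmedIn V' t) ∧
    ∀ t t', P.Conflict t t' → ¬ (P.Accepted t ∧ P.Accepted t')

/-- Validity: a transaction without any conflicting transaction is accepted by
the honest agents (it is confirmed once all messages are delivered) -/
def Validity : Prop :=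
  ∀ t : P.Tx, (∀ t', t' ≠ t → ¬ P.Conflict t t') → P.Confirmed t

/-- Honest-Termination: if a transaction without any conflicting transaction is
observed by an honest agent, then after receiving further messages the agent
accepts it -/
def HonestTermination : Prop :=
  ∀ t : P.Tx, (∀ t', t' ≠ t → ¬ P.Conflict t t') →
    ∀ V, P.IsView V → (Sum.inl t : P.Msg) ∈ V →
      ∃ V', P.IsView V' ∧ V ⊆ V' ∧ P.ConfirmedIn V' t

/-- every honest validator signs every transaction that has no conflicting
alternative -/
def HonestRespond : Prop :=
  ∀ t : P.Tx, (∀ t', t' ≠ t → ¬ P.Conflict t t') →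
    ∀ v, P.honest v → ∃ a, P.ackValidator a = v ∧ P.ackSigns a t

end ABC

namespace ABC

/-- Generic helper: a sum over a subtype equals the full sum when the ambient
function vanishes outside the subtype. -/
private lemma sum_subtype_split {α : Type*} [Fintype α] (p : α → Prop)
    [instS : Fintype {x // p x}] (f : α → ℚ) :
    (∑ a ∈ Finset.univ \ Finset.univ.image
        (Subtype.val : {x // p x} → α), f a)
      + (∑ x : {x // p x}, f x.1) = ∑ a : α, f a := by
  classical
  have h1 : (∑ x ∈ Finset.univ.image (Subtype.val : {x // p x} → α), f x)
      = ∑ x : {x // p x}, f x.1 :=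
    Finset.sum_image fun x _ y _ h => Subtype.val_injective h
  rw [← h1]
  exact Finset.sum_sdiff (Finset.subset_univ _)

private lemma notmem_im {α : Type*} [Fintype α] {p : α → Prop}
    [instS : Fintype {x // p x}] {a : α}
    (ha : a ∈ Finset.univ \ Finset.univ.image (Subtype.val : {x // p x} → α)) :
    ¬ p a := by
  intro hp
  have := (Finset.mem_sdiff.mp ha).2
  exact this (Finset.mem_image.mpr ⟨⟨a, hp⟩, Finset.mem_univ _, rfl⟩)

private lemma sum_subtype_eq' {α : Type*} [Fintype α] (p : α → Prop)
    [instS : Fintype {x // p x}] (f : α → ℚ) (g : {x // p x} → ℚ)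
    (hgf : ∀ x : {x // p x}, g x = f x.1)
    (h0 : ∀ a, ¬ p a → f a = 0) :
    ∑ x : {x // p x}, g x = ∑ a : α, f a := by
  have h := sum_subtype_split p f
  have h1 : (∑ a ∈ Finset.univ \ Finset.univ.image
      (Subtype.val : {x // p x} → α), f a) = 0 :=
    Finset.sum_eq_zero fun x hx => h0 x (notmem_im hx)
  rw [← h, h1, zero_add]
  exact Finset.sum_congr rfl fun x _ => hgf x

private lemma sum_le_sum_subtype' {α : Type*} [Fintype α] (p : α → Prop)
    [instS : Fintype {x // p x}] (f : α → ℚ) (g : {x // p x} → ℚ)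
    (hgf : ∀ x : {x // p x}, f x.1 ≤ g x)
    (h0 : ∀ a, ¬ p a → f a ≤ 0) :
    ∑ a : α, f a ≤ ∑ x : {x // p x}, g x := by
  have h := sum_subtype_split p f
  have h1 : (∑ a ∈ Finset.univ \ Finset.univ.image
      (Subtype.val : {x // p x} → α), f a) ≤ 0 :=
    Finset.sum_nonpos fun x hx => h0 x (notmem_im hx)
  have h2 : (∑ x : {x // p x}, f x.1) ≤ ∑ x : {x // p x}, g x :=
    Finset.sum_le_sum fun x _ => hgf x
  linarith

private lemma sum_subtype_le_sum' {α : Type*} [Fintype α] (p : α → Prop)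
    [instS : Fintype {x // p x}] (f : α → ℚ) (g : {x // p x} → ℚ)
    (hgf : ∀ x : {x // p x}, g x ≤ f x.1)
    (h0 : ∀ a, ¬ p a → 0 ≤ f a) :
    ∑ x : {x // p x}, g x ≤ ∑ a : α, f a := by
  have h := sum_subtype_split p f
  have h1 : (0:ℚ) ≤ ∑ a ∈ Finset.univ \ Finset.univ.image
      (Subtype.val : {x // p x} → α), f a :=
    Finset.sum_nonneg fun x hx => h0 x (notmem_im hx)
  have h2 : (∑ x : {x // p x}, g x) ≤ ∑ x : {x // p x}, f x.1 :=
    Finset.sum_le_sum fun x _ => hgf x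
  linarith

private lemma transGen_lift {α β : Type*} (e : β → α) (r : α → α → Prop) {x y : β}
    (h : Relation.TransGen (fun a b => Relation.TransGen r (e a) (e b)) x y) :
    Relation.TransGen r (e x) (e y) := by
  induction h with
  | single h => exact h
  | tail _ h ih => exact ih.trans h

variable {P : ABC}

theorem ConfirmedIn.mono {S : Set P.Msg} {t : P.Tx} (h : P.ConfirmedIn S t) :
    ∀ {S' : Set P.Msg}, S ⊆ S' → P.ConfirmedIn S' t := by
  induction h with
  | genesis S => exact fun _ => .genesis _
  | confirm S t A C hacks hinp hsign hC hstake hnoconf ih_inp ih_C =>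
    intro S' hss
    exact .confirm S' t A C (fun a ha => hss (hacks a ha))
      (fun o ho => ih_inp o ho hss) hsign
      (fun u hu => ih_C u hu (subset_refl _)) hstake hnoconf

theorem ConfirmedIn.producer_confirmed {S : Set P.Msg} {t : P.Tx}
    (h : P.ConfirmedIn S t) {o : P.Out} (ho : P.spends t o) :
    P.ConfirmedIn S (P.producer o) := by
  cases h with
  | genesis S => exact absurd ho (P.genesis_no_inputs o)
  | confirm S t A C hacks hinp hsign hC hstake hnoconf => exact hinp o ho

theorem ConfirmedIn.of_depends {S : Set P.Msg} {t u : P.Tx}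
    (h : P.ConfirmedIn S t) (hd : P.Depends t u) : P.ConfirmedIn S u := by
  revert h
  induction hd using Relation.ReflTransGen.head_induction_on with
  | refl => exact id
  | head step _ ih =>
    intro h
    obtain ⟨o, ho, hpo⟩ := step
    exact ih (hpo ▸ h.producer_confirmed ho)

theorem not_depends_genesis {t₀ : P.Tx} (hg : t₀ ≠ P.genesis) :
    ¬ P.Depends P.genesis t₀ := by
  intro h
  rcases Relation.ReflTransGen.cases_head h with heq | ⟨c, ⟨o, ho, _⟩, _⟩
  · exact hg heq.symm
  · exact P.genesis_no_inputs o ho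

theorem kept_of_spends {t₀ u : P.Tx} (hk : ¬ P.Depends u t₀) {o : P.Out}
    (h : P.spends u o) : ¬ P.Depends (P.producer o) t₀ := fun hd =>
  hk ((Relation.ReflTransGen.single ⟨o, h, rfl⟩).trans hd)

end ABC

namespace ABC

/-- remove an (unconfirmed) transaction `t₀` together with all transactions
depending on it (and all outputs of removed transactions) -/
noncomputable def erase (P : ABC) (t₀ : P.Tx) (hg : t₀ ≠ P.genesis) : ABC where
  Val := P.Val
  Tx := {u : P.Tx // ¬ P.Depends u t₀}
  Ack := P.Ack
  Out := {o : P.Out // ¬ P.Depends (P.producer o) t₀}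
  fintypeTx := Fintype.ofFinite _
  fintypeAck := P.fintypeAck
  fintypeOut := Fintype.ofFinite _
  M := P.M
  value o := P.value o.1
  value_nonneg o := P.value_nonneg o.1
  producer o := ⟨P.producer o.1, o.2⟩
  spends t o := P.spends t.1 o.1
  txValidator t := P.txValidator t.1
  delegatedTo o := P.delegatedTo o.1
  genesis := ⟨P.genesis, not_depends_genesis hg⟩
  genesis_no_inputs o := P.genesis_no_inputs o.1
  delegated_eq o h := P.delegated_eq o.1 fun he => h (Subtype.ext he)
  value_conserved t ht := by
    have ht' : t.1 ≠ P.genesis := fun he => ht (Subtype.ext he)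
    refine Eq.trans (sum_subtype_eq' (instS := Fintype.ofFinite _) (fun o => ¬ P.Depends (P.producer o) t₀)
      (fun o => if P.producer o = t.1 then P.value o else 0) _
      (fun x => by simp only [Subtype.ext_iff]) ?_) (Eq.trans
        (P.value_conserved t.1 ht')
        (sum_subtype_eq' (instS := Fintype.ofFinite _) (fun o => ¬ P.Depends (P.producer o) t₀)
          (fun o => if P.spends t.1 o then P.value o else 0) _
          (fun x => rfl) ?_).symm)
    · intro a ha
      exact if_neg fun he => (he ▸ t.2) (not_not.mp ha)
    · intro a ha
      exact if_neg fun hs => (kept_of_spends t.2 hs) (not_not.mp ha)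
  genesis_M := by
    refine Eq.trans (sum_subtype_eq' (instS := Fintype.ofFinite _) (fun o => ¬ P.Depends (P.producer o) t₀)
      (fun o => if P.producer o = P.genesis then P.value o else 0) _
      (fun x => by simp only [Subtype.ext_iff]) ?_) P.genesis_M
    intro a ha
    exact if_neg fun he => (he ▸ not_depends_genesis hg) (not_not.mp ha)
  ackValidator := P.ackValidator
  ackSigns a t := P.ackSigns a t.1
  ref m m' := Relation.TransGen P.ref (Sum.map Subtype.val id m) (Sum.map Subtype.val id m')
  ref_inputs t o h := Relation.TransGen.single (P.ref_inputs t.1 o.1 h)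
  ref_signs a t h := Relation.TransGen.single (P.ref_signs a t.1 h)
  ref_acyclic m hm := P.ref_acyclic (Sum.map Subtype.val id m)
    (transGen_lift (Sum.map Subtype.val id) P.ref hm)
  honest := P.honest

end ABC

namespace ABC

variable {P : ABC} {t₀ : P.Tx}

/-- the embedding of the messages of the erased DAG into the original one -/
def embMsg (P : ABC) (t₀ : P.Tx) (hg : t₀ ≠ P.genesis) :
    (P.erase t₀ hg).Msg → P.Msg := Sum.map Subtype.val id

theorem embMsg_inj (hg : t₀ ≠ P.genesis) : Function.Injective (embMsg P t₀ hg) :=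
  Function.Injective.sumMap Subtype.val_injective fun _ _ h => h

theorem rtg_down {hg : t₀ ≠ P.genesis} {m m' : (P.erase t₀ hg).Msg}
    (h : Relation.ReflTransGen (P.erase t₀ hg).ref m m') :
    Relation.ReflTransGen P.ref (embMsg P t₀ hg m) (embMsg P t₀ hg m') := by
  induction h with
  | refl => exact .refl
  | tail _ step ih =>
    exact ih.trans (Relation.TransGen.to_reflTransGen step)

theorem rtg_up {hg : t₀ ≠ P.genesis} {m m' : (P.erase t₀ hg).Msg}
    (h : Relation.ReflTransGen P.ref (embMsg P t₀ hg m) (embMsg P t₀ hg m')) :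
    Relation.ReflTransGen (P.erase t₀ hg).ref m m' := by
  rcases Relation.reflTransGen_iff_eq_or_transGen.mp h with heq | htg
  · obtain rfl := embMsg_inj hg heq
    exact .refl
  · exact Relation.ReflTransGen.single htg

theorem mem_pastA_erase {hg : t₀ ≠ P.genesis} (A : Finset P.Ack)
    (m : (P.erase t₀ hg).Msg) :
    m ∈ (P.erase t₀ hg).pastA A ↔ embMsg P t₀ hg m ∈ P.pastA A := by
  simp only [pastA, past, Set.mem_iUnion, Set.mem_setOf_eq]
  constructor
  · rintro ⟨a, ha, h⟩
    exact ⟨a, ha, rtg_down h⟩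
  · rintro ⟨a, ha, h⟩
    exact ⟨a, ha, rtg_up (m := Sum.inr a) h⟩

theorem pastA_erase_eq {hg : t₀ ≠ P.genesis} (A : Finset P.Ack) :
    (P.erase t₀ hg).pastA A = {m | embMsg P t₀ hg m ∈ P.pastA A} :=
  Set.ext fun m => mem_pastA_erase A m

theorem depends_erase {hg : t₀ ≠ P.genesis} {u w : P.Tx} (hd : P.Depends u w) :
    ∀ (hu : ¬ P.Depends u t₀) (hw : ¬ P.Depends w t₀),
      (P.erase t₀ hg).Depends ⟨u, hu⟩ ⟨w, hw⟩ := by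
  induction hd using Relation.ReflTransGen.head_induction_on with
  | refl => intro hu hw; exact .refl
  | @head a c step tl ih =>
    intro hu hw
    obtain ⟨o, ho, hpo⟩ := step
    have hc : ¬ P.Depends c t₀ := hpo ▸ kept_of_spends hu ho
    have hstep : ∃ o' : (P.erase t₀ hg).Out,
        (P.erase t₀ hg).spends ⟨a, hu⟩ o' ∧
          (P.erase t₀ hg).producer o' = ⟨c, hc⟩ :=
      ⟨⟨o, kept_of_spends hu ho⟩, ho, Subtype.ext hpo⟩
    exact Relation.ReflTransGen.head hstep (ih hc hw)

theorem depends_erase_down {hg : t₀ ≠ P.genesis} {t u : (P.erase t₀ hg).Tx}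
    (h : (P.erase t₀ hg).Depends t u) : P.Depends t.1 u.1 := by
  induction h with
  | refl => exact .refl
  | tail _ step ih =>
    obtain ⟨o, ho, hpo⟩ := step
    exact ih.tail ⟨o.1, ho, congrArg Subtype.val hpo⟩

theorem conflict_erase_down {hg : t₀ ≠ P.genesis} {t u : (P.erase t₀ hg).Tx}
    (h : (P.erase t₀ hg).Conflict t u) : P.Conflict t.1 u.1 := by
  obtain ⟨u₁, u₂, h1, h2, hne, o, ho1, ho2⟩ := h
  exact ⟨u₁.1, u₂.1, depends_erase_down h1, depends_erase_down h2,
    fun hv => hne (Subtype.ext hv), o.1, ho1, ho2⟩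

private lemma ite_nonneg' (c : Prop) [Decidable c] (v : ℚ) (hv : 0 ≤ v) :
    0 ≤ if c then v else 0 := by
  split_ifs <;> simp [hv]

/-- confirmations transfer from the original DAG to the erased one -/
theorem confirmedIn_erase (hg : t₀ ≠ P.genesis)
    (h₀ : ¬ P.ConfirmedIn Set.univ t₀) :
    ∀ {S : Set P.Msg} {u : P.Tx}, P.ConfirmedIn S u → ∀ (hk : ¬ P.Depends u t₀),
      (P.erase t₀ hg).ConfirmedIn {m | embMsg P t₀ hg m ∈ S} ⟨u, hk⟩ := by
  intro S u hu
  induction hu with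
  | genesis S =>
    intro hk
    have h : (P.erase t₀ hg).genesis = (⟨P.genesis, hk⟩ : (P.erase t₀ hg).Tx) :=
      Subtype.ext rfl
    exact h ▸ ConfirmedIn.genesis _
  | confirm S u A C hacks hinp hsign hC hstake hnoconf ih_inp ih_C =>
    intro hk
    refine ConfirmedIn.confirm (P := P.erase t₀ hg) _ ⟨u, hk⟩ A {x : (P.erase t₀ hg).Tx | x.1 ∈ C}
      (fun a ha => hacks a ha) (fun o ho => ih_inp o.1 ho o.2)
      (fun a ha => hsign a ha) ?_ ?_ ?_
    · intro x hx
      rw [pastA_erase_eq]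
      exact ih_C x.1 hx x.2
    · refine lt_of_lt_of_le hstake (Finset.sum_le_sum fun v _ => ?_)
      refine sum_le_sum_subtype' (instS := (P.erase t₀ hg).fintypeOut)
        (fun o => ¬ P.Depends (P.producer o) t₀)
        (fun o => if P.producer o ∈ C ∧ P.delegatedTo o = v ∧
          ¬ P.SpentIn (P.pastA A) o then P.value o else 0) _ ?_ ?_
      · intro x
        beta_reduce
        by_cases hc : P.producer x.1 ∈ C ∧ P.delegatedTo x.1 = v ∧
            ¬ P.SpentIn (P.pastA A) x.1
        · rw [if_pos hc]
          have hc' : (P.erase t₀ hg).producer x ∈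
                {y : (P.erase t₀ hg).Tx | y.1 ∈ C} ∧
              (P.erase t₀ hg).delegatedTo x = v ∧
              ¬ (P.erase t₀ hg).SpentIn ((P.erase t₀ hg).pastA A) x := by
            refine ⟨hc.1, hc.2.1, fun hsp => hc.2.2 ?_⟩
            obtain ⟨t', ht', hsp'⟩ := hsp
            exact ⟨t'.1, (mem_pastA_erase A (Sum.inl t')).1 ht', hsp'⟩
          rw [if_pos hc']
          exact le_of_eq rfl
        · rw [if_neg hc]
          exact ite_nonneg' _ _ (P.value_nonneg x.1)
      · intro a ha
        refine le_of_eq (if_neg fun hc => ?_)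
        exact h₀ ((((hC _ hc.1).mono (Set.subset_univ _)).of_depends
          (not_not.mp ha)))
    · intro t' ht' hne hshare
      obtain ⟨o, h1, h2⟩ := hshare
      exact hnoconf t'.1 ((mem_pastA_erase A (Sum.inl t')).1 ht')
        (fun h => hne (Subtype.ext h)) ⟨o.1, h1, h2⟩

end ABC

namespace ABC

variable {P : ABC} {t₀ : P.Tx}

theorem advInputValue_nonneg (Q : ABC) (t : Q.Tx) : 0 ≤ Q.advInputValue t :=
  Finset.sum_nonneg fun o _ => ite_nonneg' _ _ (Q.value_nonneg o)

theorem advInputValue_le_txValue (Q : ABC) {t : Q.Tx} (ht : t ≠ Q.genesis) :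
    Q.advInputValue t ≤ Q.txValue t := by
  rw [txValue, Q.value_conserved t ht]
  refine Finset.sum_le_sum fun o _ => ?_
  by_cases h : Q.spends t o
  · by_cases h2 : ¬ Q.honest (Q.delegatedTo o)
    · rw [if_pos ⟨h, h2⟩, if_pos h]
    · rw [if_neg (fun hc => h2 hc.2), if_pos h]
      exact Q.value_nonneg o
  · rw [if_neg (fun hc => h hc.1), if_neg h]

theorem txValue_erase (hg : t₀ ≠ P.genesis) (x : (P.erase t₀ hg).Tx) :
    (P.erase t₀ hg).txValue x = P.txValue x.1 := by
  refine sum_subtype_eq' (instS := (P.erase t₀ hg).fintypeOut)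
    (fun o => ¬ P.Depends (P.producer o) t₀)
    (fun o => if P.producer o = x.1 then P.value o else 0) _
    (fun o => by beta_reduce; simp only [erase, Subtype.ext_iff]; exact if_congr Subtype.ext_iff rfl rfl) ?_
  intro a ha
  exact if_neg fun he => (he ▸ x.2) (not_not.mp ha)

theorem advInputValue_erase (hg : t₀ ≠ P.genesis) (x : (P.erase t₀ hg).Tx) :
    (P.erase t₀ hg).advInputValue x = P.advInputValue x.1 := by
  refine sum_subtype_eq' (instS := (P.erase t₀ hg).fintypeOut)
    (fun o => ¬ P.Depends (P.producer o) t₀)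
    (fun o => if P.spends x.1 o ∧ ¬ P.honest (P.delegatedTo o)
      then P.value o else 0) _ (fun o => rfl) ?_
  intro a ha
  exact if_neg fun hc => (kept_of_spends x.2 hc.1) (not_not.mp ha)

set_option maxHeartbeats 1000000 in
theorem advStake_erase_le (hg : t₀ ≠ P.genesis)
    (h₀ : ¬ P.ConfirmedIn Set.univ t₀) (S : Set P.Msg) :
    (P.erase t₀ hg).advStake {m | embMsg P t₀ hg m ∈ S} ≤ P.advStake S := by
  unfold advStake
  refine add_le_add (sub_le_sub (le_of_eq ?_) ?_) ?_
  · -- genesis term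
    refine sum_subtype_eq' (instS := (P.erase t₀ hg).fintypeOut)
      (fun o => ¬ P.Depends (P.producer o) t₀)
      (fun o => if P.producer o = P.genesis ∧ ¬ P.honest (P.delegatedTo o)
        then P.value o else 0) _
      (fun o => by beta_reduce; simp only [erase, Subtype.ext_iff]) ?_
    intro a ha
    exact if_neg fun hc => (hc.1 ▸ not_depends_genesis hg) (not_not.mp ha)
  · -- honest confirmed term
    refine sum_le_sum_subtype' (instS := (P.erase t₀ hg).fintypeTx)
      (fun u => ¬ P.Depends u t₀)
      (fun u => if u ≠ P.genesis ∧ P.honest (P.txValidator u) ∧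
        P.ConfirmedIn S u then P.advInputValue u else 0) _ ?_ ?_
    · intro x
      beta_reduce
      by_cases hc : x.1 ≠ P.genesis ∧ P.honest (P.txValidator x.1) ∧
          P.ConfirmedIn S x.1
      · rw [if_pos hc, if_pos ⟨fun he => hc.1 (congrArg Subtype.val he), hc.2.1,
          confirmedIn_erase hg h₀ hc.2.2 x.2⟩]
        exact le_of_eq (advInputValue_erase hg x).symm
      · rw [if_neg hc]
        exact ite_nonneg' _ _ (advInputValue_nonneg (P.erase t₀ hg) x)
    · intro a ha
      refine le_of_eq (if_neg fun hc => ?_)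
      exact h₀ ((hc.2.2.mono (Set.subset_univ _)).of_depends (not_not.mp ha))
  · -- adversary issued term
    refine sum_subtype_le_sum' (instS := (P.erase t₀ hg).fintypeTx)
      (fun u => ¬ P.Depends u t₀)
      (fun u => if u ≠ P.genesis ∧ ¬ P.honest (P.txValidator u) ∧
        (Sum.inl u : P.Msg) ∈ S then P.txValue u - P.advInputValue u else 0)
      _ ?_ ?_
    · intro x
      beta_reduce
      by_cases hc : x.1 ≠ P.genesis ∧ ¬ P.honest (P.txValidator x.1) ∧
          (Sum.inl x.1 : P.Msg) ∈ S
      · rw [if_pos hc, if_pos ⟨fun he => hc.1 (congrArg Subtype.val he), hc.2.1,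
          hc.2.2⟩, txValue_erase hg x, advInputValue_erase hg x]
      · rw [if_neg hc, if_neg
          (fun hce => hc ⟨fun he => hce.1 (Subtype.ext he), hce.2.1, hce.2.2⟩)]
    · intro a ha
      beta_reduce
      by_cases hc : a ≠ P.genesis ∧ ¬ P.honest (P.txValidator a) ∧
          (Sum.inl a : P.Msg) ∈ S
      · rw [if_pos hc]
        exact sub_nonneg.2 (advInputValue_le_txValue P hc.1)
      · rw [if_neg hc]

private lemma time_lt_of_transGen (Eex : P.Execution) {m m' : P.Msg}
    (h : Relation.TransGen P.ref m m') : Eex.time m' < Eex.time m := by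
  induction h with
  | single h => exact Eex.respects _ _ h
  | tail _ h ih => exact lt_trans (Eex.respects _ _ h) ih

end ABC

/-- STATEMENT 3 (Lemma "no unconfirmed transactions" of the paper): if `G` is a
transaction DAG with the minimal number of transactions among all DAGs
producible by the ABC protocol that contain two confirmed conflicting
transactions, then every transaction of `G` is confirmed. -/
theorem ABC.minimal_counterexample_all_confirmed (G : ABC)
    (hG : G.Producible) (hds : G.HasDoubleSpend)
    (hmin : ∀ G' : ABC, G'.Producible → G'.HasDoubleSpend →
      Fintype.card G.Tx ≤ Fintype.card G'.Tx) :
    ∀ t : G.Tx, G.Confirmed t := by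
  intro t
  by_contra h₀
  have hgen : t ≠ G.genesis := fun he => h₀ (he ▸ ConfirmedIn.genesis _)
  obtain ⟨hchain, hnosign, Eex, hbound⟩ := hG
  have hprod : (G.erase t hgen).Producible := by
    refine ⟨?_, ?_, ?_⟩
    · intro a₁ a₂ hh he
      rcases hchain a₁ a₂ hh he with h | h
      · exact Or.inl (rtg_up (hg := hgen) (m := Sum.inr a₁) (m' := Sum.inr a₂) h)
      · exact Or.inr (rtg_up (hg := hgen) (m := Sum.inr a₂) (m' := Sum.inr a₁) h)
    · intro a₁ a₂ t₁ t₂ hh he hs1 hs2 hne hcf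
      exact hnosign a₁ a₂ t₁.1 t₂.1 hh he hs1 hs2
        (fun h => hne (Subtype.ext h)) (conflict_erase_down hcf)
    · refine ⟨⟨fun m => Eex.time (embMsg G t hgen m),
        Eex.inj.comp (embMsg_inj hgen),
        fun m m' hr => time_lt_of_transGen Eex hr⟩, fun n => ?_⟩
      exact lt_of_le_of_lt (advStake_erase_le hgen h₀ (G.prefixAt Eex n)) (hbound n)
  have hds' : (G.erase t hgen).HasDoubleSpend := by
    obtain ⟨tx, ty, hcx, hcy, hcf⟩ := hds
    have kx : ¬ G.Depends tx t := fun hd => h₀ (ConfirmedIn.of_depends hcx hd)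
    have ky : ¬ G.Depends ty t := fun hd => h₀ (ConfirmedIn.of_depends hcy hd)
    obtain ⟨u₁, u₂, hd1, hd2, hne, o, ho1, ho2⟩ := hcf
    have ku1 : ¬ G.Depends u₁ t := fun hd => kx (hd1.trans hd)
    have ku2 : ¬ G.Depends u₂ t := fun hd => ky (hd2.trans hd)
    exact ⟨⟨tx, kx⟩, ⟨ty, ky⟩,
      (confirmedIn_erase hgen h₀ hcx kx).mono (Set.subset_univ _),
      (confirmedIn_erase hgen h₀ hcy ky).mono (Set.subset_univ _),
      ⟨u₁, ku1⟩, ⟨u₂, ku2⟩, depends_erase hd1 kx ku1, depends_erase hd2 ky ku2,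
      fun h => hne (congrArg Subtype.val h),
      ⟨o, kept_of_spends ku1 ho1⟩, ho1, ho2⟩
  have hlt : Fintype.card (G.erase t hgen).Tx < Fintype.card G.Tx :=
    Fintype.card_lt_of_injective_of_notMem Subtype.val Subtype.val_injective
      (b := t) (by
        rintro ⟨x, hx⟩
        exact x.2 (by rw [hx]; exact Relation.ReflTransGen.refl))
  exact absurd (hmin _ hprod hds') (not_le.mpr hlt)
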